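/- Let Σ̂ be an n×n symmetric positive definite matrix. Let Σ₁ ∈ 𝚺₁ be positive definite, let Σ₀ be the (unique) minimizer over positive definite matrices in 𝚺₀ of I(· ‖ Σ₁), let Σ₁′ be the minimizer over 𝚺₁ of I(Σ₀ ‖ ·) given in Proposition 4.4 (the matrix obtained from Σ₀ by replacing its (1,1)-block by (Σ₀)₁₂(Σ₀)₂₂⁻¹(Σ₀)₂₁ + Δ((Σ₀)₁₁ − (Σ₀)₁₂(Σ₀)₂₂⁻¹(Σ₀)₂₁)), and let Σ₀′ be the minimizer over positive definite matrices in 𝚺₀ of I(· ‖ Σ₁′). Then I(Σ̂ ‖ (Σ₁)₁₁) − I(Σ̂ ‖ (Σ₁′)₁₁) = I(Σ₁′ ‖ Σ₁) + I(Σ₀ ‖ Σ₀′); in particular one step of the alternating minimization algorithm decreases the I-divergence I(Σ̂ ‖ HHᵀ + D) by the sum of two I-divergences. -/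

import Mathlib

open Matrix

/-- I-divergence between two positive definite matrices. -/
noncomputable def Idiv {ι : Type} [Fintype ι] [DecidableEq ι]
    (S1 S2 : Matrix ι ι ℝ) : ℝ :=
  (1 / 2) * Real.log (S2.det / S1.det) - (Fintype.card ι : ℝ) / 2
    + (1 / 2) * (S2⁻¹ * S1).trace

/-- `Δ(M)`: the diagonal matrix with the same diagonal as `M`. -/
def deltaOp {ι : Type} [Fintype ι] [DecidableEq ι] (M : Matrix ι ι ℝ) :
    Matrix ι ι ℝ :=
  Matrix.diagonal (fun i => M i i)

/-- The minimizer over `𝚺₀` (matrices with `(1,1)`-block `Σ̂`) of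
`I(·‖Σ)`, as given by Proposition 4.2. -/
noncomputable def minOverSigma0 {n k : ℕ} (Shat : Matrix (Fin n) (Fin n) ℝ)
    (S : Matrix (Fin n ⊕ Fin k) (Fin n ⊕ Fin k) ℝ) :
    Matrix (Fin n ⊕ Fin k) (Fin n ⊕ Fin k) ℝ :=
  fromBlocks Shat (Shat * S.toBlocks₁₁⁻¹ * S.toBlocks₁₂)
    (S.toBlocks₂₁ * S.toBlocks₁₁⁻¹ * Shat)
    (S.toBlocks₂₂ - S.toBlocks₂₁ * S.toBlocks₁₁⁻¹
      * (S.toBlocks₁₁ - Shat) * S.toBlocks₁₁⁻¹ * S.toBlocks₁₂)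

/-- The minimizer over `𝚺₁` of `I(Σ‖·)`, as given by Proposition 4.4:
the matrix obtained from `Σ` by replacing its `(1,1)`-block by
`Σ₁₂Σ₂₂⁻¹Σ₂₁ + Δ(Σ₁₁ − Σ₁₂Σ₂₂⁻¹Σ₂₁)`. -/
noncomputable def minOverSigma1 {n k : ℕ}
    (S : Matrix (Fin n ⊕ Fin k) (Fin n ⊕ Fin k) ℝ) :
    Matrix (Fin n ⊕ Fin k) (Fin n ⊕ Fin k) ℝ :=
  fromBlocks
    (S.toBlocks₁₂ * S.toBlocks₂₂⁻¹ * S.toBlocks₂₁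
      + deltaOp (S.toBlocks₁₁ - S.toBlocks₁₂ * S.toBlocks₂₂⁻¹ * S.toBlocks₂₁))
    S.toBlocks₁₂ S.toBlocks₂₁ S.toBlocks₂₂

section Helpers
variable {α β : Type} [Fintype α] [Fintype β] [DecidableEq α] [DecidableEq β]
set_option linter.unusedSectionVars false

lemma realCT {γ δ : Type} (M : Matrix γ δ ℝ) : Mᴴ = Mᵀ := by
  ext i j; simp [conjTranspose_apply]

lemma trace_fromBlocks' (A : Matrix α α ℝ) (B : Matrix α β ℝ) (C : Matrix β α ℝ)
    (D : Matrix β β ℝ) : (fromBlocks A B C D).trace = A.trace + D.trace := by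
  simp [Matrix.trace, Matrix.diag, Fintype.sum_sum_type, fromBlocks_apply₁₁, fromBlocks_apply₂₂]

lemma fromBlocks_sub' (A A' : Matrix α α ℝ) (B B' : Matrix α β ℝ) (C C' : Matrix β α ℝ)
    (D D' : Matrix β β ℝ) :
    fromBlocks A B C D - fromBlocks A' B' C' D'
      = fromBlocks (A - A') (B - B') (C - C') (D - D') := by
  ext i j
  rcases i with i | i <;> rcases j with j | j <;>
    simp [fromBlocks, Matrix.sub_apply]

lemma det_fromBlocks11' {A : Matrix α α ℝ} (B : Matrix α β ℝ) (C : Matrix β α ℝ)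
    (E : Matrix β β ℝ) (hA : IsUnit A.det) :
    (fromBlocks A B C E).det = A.det * (E - C * A⁻¹ * B).det := by
  letI := A.invertibleOfIsUnitDet hA
  rw [Matrix.det_fromBlocks₁₁, invOf_eq_nonsing_inv]

lemma det_fromBlocks22' (A : Matrix α α ℝ) (B : Matrix α β ℝ) (C : Matrix β α ℝ)
    {E : Matrix β β ℝ} (hE : IsUnit E.det) :
    (fromBlocks A B C E).det = E.det * (A - B * E⁻¹ * C).det := by
  letI := E.invertibleOfIsUnitDet hE
  rw [Matrix.det_fromBlocks₂₂, invOf_eq_nonsing_inv]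

lemma inv_fromBlocks11' {A : Matrix α α ℝ} (B : Matrix α β ℝ) (C : Matrix β α ℝ)
    (E : Matrix β β ℝ) (hA : IsUnit A.det) (hSc : IsUnit (E - C * A⁻¹ * B).det) :
    (fromBlocks A B C E)⁻¹ =
      fromBlocks (A⁻¹ + A⁻¹ * B * (E - C * A⁻¹ * B)⁻¹ * C * A⁻¹)
        (-(A⁻¹ * B * (E - C * A⁻¹ * B)⁻¹))
        (-((E - C * A⁻¹ * B)⁻¹ * C * A⁻¹)) ((E - C * A⁻¹ * B)⁻¹) := by
  letI := A.invertibleOfIsUnitDet hA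
  have e1 : ⅟A = A⁻¹ := invOf_eq_nonsing_inv A
  letI : Invertible (E - C * ⅟A * B) := by
    rw [e1]; exact (E - C * A⁻¹ * B).invertibleOfIsUnitDet hSc
  letI := fromBlocks₁₁Invertible A B C E
  rw [← invOf_eq_nonsing_inv, Matrix.invOf_fromBlocks₁₁_eq]
  simp only [e1, invOf_eq_nonsing_inv]

lemma inv_fromBlocks22' (A : Matrix α α ℝ) (B : Matrix α β ℝ) (C : Matrix β α ℝ)
    {E : Matrix β β ℝ} (hE : IsUnit E.det) (hSc : IsUnit (A - B * E⁻¹ * C).det) :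
    (fromBlocks A B C E)⁻¹ =
      fromBlocks ((A - B * E⁻¹ * C)⁻¹) (-((A - B * E⁻¹ * C)⁻¹ * B * E⁻¹))
        (-(E⁻¹ * C * (A - B * E⁻¹ * C)⁻¹))
        (E⁻¹ + E⁻¹ * C * (A - B * E⁻¹ * C)⁻¹ * B * E⁻¹) := by
  letI := E.invertibleOfIsUnitDet hE
  have e1 : ⅟E = E⁻¹ := invOf_eq_nonsing_inv E
  letI : Invertible (A - B * ⅟E * C) := by
    rw [e1]; exact (A - B * E⁻¹ * C).invertibleOfIsUnitDet hSc
  letI := fromBlocks₂₂Invertible A B C E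
  rw [← invOf_eq_nonsing_inv, Matrix.invOf_fromBlocks₂₂_eq]
  simp only [e1, invOf_eq_nonsing_inv]

lemma posDef_of_posSemidef_isUnit {M : Matrix α α ℝ} (h : M.PosSemidef)
    (hd : IsUnit M.det) : M.PosDef := by
  refine posDef_iff_dotProduct_mulVec.mpr
    ⟨h.1, fun x hx => lt_of_le_of_ne (h.dotProduct_mulVec_nonneg x) fun heq => hx ?_⟩
  have h0 : M *ᵥ x = 0 := (h.dotProduct_mulVec_zero_iff x).mp heq.symm
  have hinj := (Matrix.mulVec_injective_iff_isUnit (K := ℝ)).mpr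
    ((Matrix.isUnit_iff_isUnit_det M).mpr hd)
  exact hinj (a₁ := x) (a₂ := 0) (by simpa using h0)

lemma posDef_toBlocks11 {S : Matrix (α ⊕ β) (α ⊕ β) ℝ} (h : S.PosDef) :
    S.toBlocks₁₁.PosDef := by
  refine posDef_iff_dotProduct_mulVec.mpr ⟨?_, ?_⟩
  · exact h.1.submatrix Sum.inl
  · intro x hx
    have hx' : (Sum.elim x 0 : α ⊕ β → ℝ) ≠ 0 := by
      intro hcon; apply hx; funext i; exact congrFun hcon (Sum.inl i)
    have h2 := h.dotProduct_mulVec_pos hx'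
    have hst : star (Sum.elim x 0 : α ⊕ β → ℝ) = Sum.elim (star x) 0 := by
      funext i; cases i <;> simp
    rw [← fromBlocks_toBlocks S, fromBlocks_mulVec, hst,
      sumElim_dotProduct_sumElim] at h2
    simpa using h2

lemma posDef_toBlocks22 {S : Matrix (α ⊕ β) (α ⊕ β) ℝ} (h : S.PosDef) :
    S.toBlocks₂₂.PosDef := by
  refine posDef_iff_dotProduct_mulVec.mpr ⟨?_, ?_⟩
  · exact h.1.submatrix Sum.inr
  · intro x hx
    have hx' : (Sum.elim 0 x : α ⊕ β → ℝ) ≠ 0 := by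
      intro hcon; apply hx; funext i; exact congrFun hcon (Sum.inr i)
    have h2 := h.dotProduct_mulVec_pos hx'
    have hst : star (Sum.elim (0 : α → ℝ) x) = Sum.elim (0 : α → ℝ) (star x) := by
      funext i; cases i <;> simp
    rw [← fromBlocks_toBlocks S, fromBlocks_mulVec, hst,
      sumElim_dotProduct_sumElim] at h2
    simpa using h2

lemma posDef_diag_pos {M : Matrix α α ℝ} (h : M.PosDef) (i : α) : 0 < M i i := by
  have := h.dotProduct_mulVec_pos (x := Pi.single i 1) (by simp [Pi.single_eq_same, funext_iff]; exact ⟨i, by simp⟩)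
  simpa [dotProduct, Pi.single_apply, mulVec, Finset.sum_ite_eq] using this

lemma trace_diagonal_mul (d : α → ℝ) (M : Matrix α α ℝ) :
    (diagonal d * M).trace = ∑ i, d i * M i i := by
  simp [Matrix.trace, Matrix.diag, diagonal_mul]

end Helpers

section StepA
variable {n k : ℕ}

lemma minOverSigma0_fromBlocks (Shat A : Matrix (Fin n) (Fin n) ℝ)
    (B : Matrix (Fin n) (Fin k) ℝ) (C : Matrix (Fin k) (Fin n) ℝ)
    (E : Matrix (Fin k) (Fin k) ℝ) :
    minOverSigma0 Shat (fromBlocks A B C E)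
      = fromBlocks Shat (Shat * A⁻¹ * B) (C * A⁻¹ * Shat)
          (E - C * A⁻¹ * (A - Shat) * A⁻¹ * B) := by
  simp [minOverSigma0, toBlocks_fromBlocks₁₁, toBlocks_fromBlocks₁₂,
    toBlocks_fromBlocks₂₁, toBlocks_fromBlocks₂₂]

lemma schur_key {Shat A : Matrix (Fin n) (Fin n) ℝ} (B : Matrix (Fin n) (Fin k) ℝ)
    (C : Matrix (Fin k) (Fin n) ℝ) (E : Matrix (Fin k) (Fin k) ℝ)
    (hShat : IsUnit Shat.det) (hA : IsUnit A.det) :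
    (E - C * A⁻¹ * (A - Shat) * A⁻¹ * B) - (C * A⁻¹ * Shat) * Shat⁻¹ * (Shat * A⁻¹ * B)
      = E - C * A⁻¹ * B := by
  simp only [Matrix.mul_sub, Matrix.sub_mul, Matrix.mul_assoc,
    Matrix.mul_nonsing_inv_cancel_left _ _ hShat, Matrix.mul_nonsing_inv_cancel_left _ _ hA]
  abel

lemma det_minOverSigma0 {Shat A : Matrix (Fin n) (Fin n) ℝ}
    (B : Matrix (Fin n) (Fin k) ℝ) (C : Matrix (Fin k) (Fin n) ℝ)
    (E : Matrix (Fin k) (Fin k) ℝ) (hShat : IsUnit Shat.det) (hA : IsUnit A.det) :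
    (minOverSigma0 Shat (fromBlocks A B C E)).det
      = Shat.det * (E - C * A⁻¹ * B).det := by
  rw [minOverSigma0_fromBlocks, det_fromBlocks11' _ _ _ hShat,
    schur_key B C E hShat hA]

lemma inv_minOverSigma0 {Shat A : Matrix (Fin n) (Fin n) ℝ}
    (B : Matrix (Fin n) (Fin k) ℝ) (C : Matrix (Fin k) (Fin n) ℝ)
    (E : Matrix (Fin k) (Fin k) ℝ) (hShat : IsUnit Shat.det) (hA : IsUnit A.det)
    (hSc : IsUnit (E - C * A⁻¹ * B).det) :
    (minOverSigma0 Shat (fromBlocks A B C E))⁻¹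
      = fromBlocks (Shat⁻¹ + A⁻¹ * B * (E - C * A⁻¹ * B)⁻¹ * C * A⁻¹)
          (-(A⁻¹ * B * (E - C * A⁻¹ * B)⁻¹))
          (-((E - C * A⁻¹ * B)⁻¹ * C * A⁻¹)) ((E - C * A⁻¹ * B)⁻¹) := by
  rw [minOverSigma0_fromBlocks]
  have h := inv_fromBlocks11' (A := Shat) (Shat * A⁻¹ * B) (C * A⁻¹ * Shat)
    (E - C * A⁻¹ * (A - Shat) * A⁻¹ * B) hShat
    (by rw [schur_key B C E hShat hA]; exact hSc)
  rw [schur_key B C E hShat hA] at h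
  rw [h, fromBlocks_inj]
  refine ⟨?_, ?_, ?_, rfl⟩ <;>
    simp only [Matrix.mul_assoc, Matrix.mul_nonsing_inv _ hShat, Matrix.nonsing_inv_mul _ hShat,
      Matrix.mul_one, Matrix.one_mul, Matrix.mul_nonsing_inv_cancel_left _ _ hShat,
      Matrix.nonsing_inv_mul_cancel_left _ _ hShat]

lemma trace_key {Shat A : Matrix (Fin n) (Fin n) ℝ}
    (B : Matrix (Fin n) (Fin k) ℝ) (C : Matrix (Fin k) (Fin n) ℝ)
    (E : Matrix (Fin k) (Fin k) ℝ) (hShat : IsUnit Shat.det) (hA : IsUnit A.det)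
    (hSc : IsUnit (E - C * A⁻¹ * B).det) :
    ((fromBlocks A B C E)⁻¹ * minOverSigma0 Shat (fromBlocks A B C E)).trace
      = (A⁻¹ * Shat).trace + k := by
  rw [inv_fromBlocks11' B C E hA hSc, minOverSigma0_fromBlocks, fromBlocks_multiply,
    trace_fromBlocks']
  have h11 : (A⁻¹ + A⁻¹ * B * (E - C * A⁻¹ * B)⁻¹ * C * A⁻¹) * Shat
      + (-(A⁻¹ * B * (E - C * A⁻¹ * B)⁻¹)) * (C * A⁻¹ * Shat) = A⁻¹ * Shat := by
    simp only [Matrix.add_mul, Matrix.neg_mul, Matrix.mul_assoc]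
    abel
  have hSc' : IsUnit (E - C * (A⁻¹ * B)).det := by rw [← Matrix.mul_assoc]; exact hSc
  have h22 : (-((E - C * A⁻¹ * B)⁻¹ * C * A⁻¹)) * (Shat * A⁻¹ * B)
      + (E - C * A⁻¹ * B)⁻¹ * (E - C * A⁻¹ * (A - Shat) * A⁻¹ * B)
      = (1 : Matrix (Fin k) (Fin k) ℝ) := by
    have h := Matrix.nonsing_inv_mul (E - C * (A⁻¹ * B)) hSc'
    rw [Matrix.mul_sub] at h
    simp only [Matrix.mul_sub, Matrix.sub_mul, Matrix.neg_mul, Matrix.mul_assoc,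
      Matrix.mul_nonsing_inv_cancel_left _ _ hA,
      Matrix.mul_nonsing_inv_cancel_left _ _ hShat]
    rw [← h]
    abel
  rw [h11, h22, Matrix.trace_one]
  simp

lemma stepA (Shat A : Matrix (Fin n) (Fin n) ℝ)
    (B : Matrix (Fin n) (Fin k) ℝ) (C : Matrix (Fin k) (Fin n) ℝ)
    (E : Matrix (Fin k) (Fin k) ℝ) (hShat : IsUnit Shat.det) (hA : IsUnit A.det)
    (hSc : IsUnit (E - C * A⁻¹ * B).det) :
    Idiv Shat A
      = Idiv (minOverSigma0 Shat (fromBlocks A B C E)) (fromBlocks A B C E) := by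
  unfold Idiv
  rw [det_fromBlocks11' B C E hA, det_minOverSigma0 B C E hShat hA,
    trace_key B C E hShat hA hSc,
    mul_div_mul_right _ _ hSc.ne_zero]
  simp only [Fintype.card_sum, Fintype.card_fin]
  push_cast
  ring

end StepA

theorem stmt_11 (n k : ℕ)
    (Shat : Matrix (Fin n) (Fin n) ℝ) (hShat : Shat.PosDef)
    (S1 : Matrix (Fin n ⊕ Fin k) (Fin n ⊕ Fin k) ℝ) (hS1pos : S1.PosDef)
    (hS1mem : ∃ (H : Matrix (Fin n) (Fin k) ℝ) (D : Matrix (Fin n) (Fin n) ℝ)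
        (Q : Matrix (Fin k) (Fin k) ℝ),
      D.IsDiag ∧ D.PosSemidef ∧
      S1 = fromBlocks (H * Hᵀ + D) (H * Q) (Qᵀ * Hᵀ) (Qᵀ * Q))
    (S0 : Matrix (Fin n ⊕ Fin k) (Fin n ⊕ Fin k) ℝ)
    (hS0 : S0 = minOverSigma0 Shat S1)
    (S1' : Matrix (Fin n ⊕ Fin k) (Fin n ⊕ Fin k) ℝ)
    (hS1' : S1' = minOverSigma1 S0)
    (S0' : Matrix (Fin n ⊕ Fin k) (Fin n ⊕ Fin k) ℝ)
    (hS0' : S0' = minOverSigma0 Shat S1') :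
    Idiv Shat S1.toBlocks₁₁ - Idiv Shat S1'.toBlocks₁₁ =
      Idiv S1' S1 + Idiv S0 S0' := by
  obtain ⟨H, D, Q, hDdiag, hDpsd, hS1eq⟩ := hS1mem
  set A : Matrix (Fin n) (Fin n) ℝ := H * Hᵀ + D with hA_def
  set B : Matrix (Fin n) (Fin k) ℝ := H * Q with hB_def
  set C : Matrix (Fin k) (Fin n) ℝ := Qᵀ * Hᵀ with hC_def
  set E : Matrix (Fin k) (Fin k) ℝ := Qᵀ * Q with hE_def
  -- basic unit facts
  have hShatU : IsUnit Shat.det := hShat.det_pos.ne'.isUnit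
  have hS1U : IsUnit S1.det := hS1pos.det_pos.ne'.isUnit
  have hApos : A.PosDef := by
    have := posDef_toBlocks11 hS1pos
    rwa [hS1eq, toBlocks_fromBlocks₁₁] at this
  have hEpos : E.PosDef := by
    have := posDef_toBlocks22 hS1pos
    rwa [hS1eq, toBlocks_fromBlocks₂₂] at this
  have hAU : IsUnit A.det := hApos.det_pos.ne'.isUnit
  have hEU : IsUnit E.det := hEpos.det_pos.ne'.isUnit
  -- symmetry facts
  have hCB : C = Bᵀ := by rw [hB_def, hC_def, transpose_mul]
  have hShatT : Shatᵀ = Shat := by rw [← realCT]; exact hShat.isHermitian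
  have hAT : Aᵀ = A := by rw [← realCT]; exact hApos.isHermitian
  have hBH : Bᴴ = C := by rw [realCT, hCB]
  -- Schur complement of S1
  set Sc : Matrix (Fin k) (Fin k) ℝ := E - C * A⁻¹ * B with hSc_def
  have hdetS1 : S1.det = A.det * Sc.det := by
    rw [hS1eq, det_fromBlocks11' B C E hAU]
  have hScU : IsUnit Sc.det := by
    rw [hdetS1] at hS1U
    exact isUnit_of_mul_isUnit_right hS1U
  -- blocks of S0
  set B₀ : Matrix (Fin n) (Fin k) ℝ := Shat * A⁻¹ * B with hB₀_def
  set C₀ : Matrix (Fin k) (Fin n) ℝ := C * A⁻¹ * Shat with hC₀_def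
  set E₀ : Matrix (Fin k) (Fin k) ℝ := E - C * A⁻¹ * (A - Shat) * A⁻¹ * B with hE₀_def
  have hS0b : S0 = fromBlocks Shat B₀ C₀ E₀ := by
    rw [hS0, hS1eq, minOverSigma0_fromBlocks]
  have hdetS0 : S0.det = Shat.det * Sc.det := by
    rw [hS0, hS1eq, det_minOverSigma0 B C E hShatU hAU]
  have hS0U : IsUnit S0.det := by rw [hdetS0]; exact hShatU.mul hScU
  have hC₀B₀ : B₀ᴴ = C₀ := by
    rw [realCT, hB₀_def, hC₀_def]
    simp [transpose_mul, Matrix.transpose_nonsing_inv, hAT, hShatT, hCB, Matrix.mul_assoc]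
  -- S0 is positive definite
  have hScPsd : Sc.PosSemidef := by
    letI := A.invertibleOfIsUnitDet hAU
    have := (Matrix.PosDef.fromBlocks₁₁ B E hApos).mp
      (by rw [hBH, ← hS1eq]; exact hS1pos.posSemidef)
    rwa [hBH] at this
  have hS0psd : S0.PosSemidef := by
    letI := Shat.invertibleOfIsUnitDet hShatU
    rw [hS0b, ← hC₀B₀]
    refine (Matrix.PosDef.fromBlocks₁₁ B₀ E₀ hShat).mpr ?_
    rw [hC₀B₀]
    have : E₀ - C₀ * Shat⁻¹ * B₀ = Sc := by
      rw [hE₀_def, hB₀_def, hC₀_def, hSc_def]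
      exact schur_key B C E hShatU hAU
    rw [this]
    exact hScPsd
  have hS0pos : S0.PosDef := posDef_of_posSemidef_isUnit hS0psd hS0U
  have hE₀pos : E₀.PosDef := by
    have := posDef_toBlocks22 hS0pos
    rwa [hS0b, toBlocks_fromBlocks₂₂] at this
  have hE₀U : IsUnit E₀.det := hE₀pos.det_pos.ne'.isUnit
  -- W and its diagonal
  set P : Matrix (Fin n) (Fin n) ℝ := B₀ * E₀⁻¹ * C₀ with hP_def
  set W : Matrix (Fin n) (Fin n) ℝ := Shat - P with hW_def
  have hWpsd : W.PosSemidef := by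
    letI := E₀.invertibleOfIsUnitDet hE₀U
    have := (Matrix.PosDef.fromBlocks₂₂ Shat B₀ hE₀pos).mp
      (by rw [hC₀B₀, ← hS0b]; exact hS0pos.posSemidef)
    rwa [hC₀B₀] at this
  have hdetS0' : S0.det = E₀.det * W.det := by
    rw [hS0b, det_fromBlocks22' Shat B₀ C₀ hE₀U]
  have hWU : IsUnit W.det := by
    rw [hdetS0'] at hS0U
    exact isUnit_of_mul_isUnit_right hS0U
  have hWpos : W.PosDef := posDef_of_posSemidef_isUnit hWpsd hWU
  set ΔW : Matrix (Fin n) (Fin n) ℝ := deltaOp W with hΔW_def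
  have hΔWpos : ΔW.PosDef := by
    rw [hΔW_def, deltaOp]
    exact Matrix.posDef_diagonal_iff.mpr fun i => posDef_diag_pos hWpos i
  have hΔWU : IsUnit ΔW.det := hΔWpos.det_pos.ne'.isUnit
  -- the matrix S1'
  set G : Matrix (Fin n) (Fin n) ℝ := P + ΔW with hG_def
  have hS1'b : S1' = fromBlocks G B₀ C₀ E₀ := by
    rw [hS1', hS0b, minOverSigma1]
    simp only [toBlocks_fromBlocks₁₁, toBlocks_fromBlocks₁₂,
      toBlocks_fromBlocks₂₁, toBlocks_fromBlocks₂₂]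
    rfl
  have hPpsd : P.PosSemidef := by
    rw [hP_def, ← hC₀B₀]
    exact hE₀pos.inv.posSemidef.mul_mul_conjTranspose_same B₀
  have hGpos : G.PosDef := Matrix.PosDef.posSemidef_add hPpsd hΔWpos
  have hGU : IsUnit G.det := hGpos.det_pos.ne'.isUnit
  have hG_schur : G - B₀ * E₀⁻¹ * C₀ = ΔW := by
    rw [hG_def, hP_def]; exact add_sub_cancel_left _ _
  have hdetS1' : S1'.det = E₀.det * ΔW.det := by
    rw [hS1'b, det_fromBlocks22' G B₀ C₀ hE₀U, hG_schur]
  have hS1'U : IsUnit S1'.det := by rw [hdetS1']; exact hE₀U.mul hΔWU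
  -- Schur complement of S1' w.r.t. G
  set Sc' : Matrix (Fin k) (Fin k) ℝ := E₀ - C₀ * G⁻¹ * B₀ with hSc'_def
  have hdetS1'2 : S1'.det = G.det * Sc'.det := by
    rw [hS1'b, det_fromBlocks11' B₀ C₀ E₀ hGU]
  have hSc'U : IsUnit Sc'.det := by
    rw [hdetS1'2] at hS1'U
    exact isUnit_of_mul_isUnit_right hS1'U
  have hS1'U : IsUnit S1'.det := by rw [hdetS1'2]; exact hGU.mul hSc'U
  have hdetS0'2 : S0'.det = Shat.det * Sc'.det := by
    rw [hS0', hS1'b, det_minOverSigma0 B₀ C₀ E₀ hShatU hGU]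
  have hS0'U : IsUnit S0'.det := by rw [hdetS0'2]; exact hShatU.mul hSc'U
  -- step A at the two scales
  have hTB1 : S1.toBlocks₁₁ = A := by rw [hS1eq, toBlocks_fromBlocks₁₁]
  have hTB1' : S1'.toBlocks₁₁ = G := by rw [hS1'b, toBlocks_fromBlocks₁₁]
  have hA1 : Idiv Shat S1.toBlocks₁₁ = Idiv S0 S1 := by
    rw [hTB1, hS0, hS1eq]
    exact stepA Shat A B C E hShatU hAU hScU
  have hA2 : Idiv Shat S1'.toBlocks₁₁ = Idiv S0' S1' := by
    rw [hTB1', hS0', hS1'b]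
    exact stepA Shat G B₀ C₀ E₀ hShatU hGU hSc'U
  -- part B : Idiv S0 S1 = Idiv S1' S1 + Idiv S0 S1'
  have hQU : IsUnit Q.det := by
    have : E.det = Q.det * Q.det := by
      rw [hE_def, Matrix.det_mul, Matrix.det_transpose, mul_comm]
    rw [this] at hEU
    exact isUnit_of_mul_isUnit_right hEU
  have hQTU : IsUnit Qᵀ.det := by rw [Matrix.det_transpose]; exact hQU
  have hD_schur : A - B * E⁻¹ * C = D := by
    have hBB : B * E⁻¹ * C = H * Hᵀ := by
      rw [hB_def, hC_def, hE_def, Matrix.mul_inv_rev]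
      simp only [Matrix.mul_assoc, Matrix.mul_nonsing_inv_cancel_left _ _ hQU,
        Matrix.nonsing_inv_mul_cancel_left _ _ hQTU]
    rw [hBB, hA_def]
    exact add_sub_cancel_left _ _
  have hDU : IsUnit D.det := by
    have := det_fromBlocks22' A B C hEU
    rw [← hS1eq, hD_schur] at this
    rw [this] at hS1U
    exact isUnit_of_mul_isUnit_right hS1U
  have hS1inv : S1⁻¹ = fromBlocks D⁻¹ (-(D⁻¹ * B * E⁻¹)) (-(E⁻¹ * C * D⁻¹))
      (E⁻¹ + E⁻¹ * C * D⁻¹ * B * E⁻¹) := by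
    rw [hS1eq, inv_fromBlocks22' A B C hEU (by rw [hD_schur]; exact hDU), hD_schur]
  have hS1'inv22 : S1'⁻¹ = fromBlocks ΔW⁻¹ (-(ΔW⁻¹ * B₀ * E₀⁻¹)) (-(E₀⁻¹ * C₀ * ΔW⁻¹))
      (E₀⁻¹ + E₀⁻¹ * C₀ * ΔW⁻¹ * B₀ * E₀⁻¹) := by
    rw [hS1'b, inv_fromBlocks22' G B₀ C₀ hE₀U (by rw [hG_schur]; exact hΔWU), hG_schur]
  have hdiff : S0 - S1' = fromBlocks (Shat - G) 0 0 0 := by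
    rw [hS0b, hS1'b, fromBlocks_sub', sub_self, sub_self, sub_self]
  have hdiag0 : ∀ i, (Shat - G) i i = 0 := by
    intro i
    rw [hG_def, hΔW_def, hW_def, deltaOp]
    simp [Matrix.sub_apply, Matrix.add_apply, Matrix.diagonal_apply_eq]
  have htrD : ∀ (V : Matrix (Fin n) (Fin n) ℝ), V.IsDiag →
      (V⁻¹ * (Shat - G)).trace = 0 := by
    intro V hV
    rw [← hV.diagonal_diag, Matrix.inv_diagonal, trace_diagonal_mul]
    refine Finset.sum_eq_zero fun i _ => ?_
    rw [hdiag0 i, mul_zero]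
  have htr1 : (S1⁻¹ * (S0 - S1')).trace = 0 := by
    rw [hdiff, hS1inv, fromBlocks_multiply]
    simp only [Matrix.mul_zero, Matrix.zero_mul, add_zero, zero_add]
    rw [trace_fromBlocks', Matrix.trace_zero, add_zero]
    exact htrD D hDdiag
  have htr2 : (S1'⁻¹ * (S0 - S1')).trace = 0 := by
    rw [hdiff, hS1'inv22, fromBlocks_multiply]
    simp only [Matrix.mul_zero, Matrix.zero_mul, add_zero, zero_add]
    rw [trace_fromBlocks', Matrix.trace_zero, add_zero]
    exact htrD ΔW (by rw [hΔW_def, deltaOp]; exact isDiag_diagonal _)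
  have e1 : (S1⁻¹ * S0).trace = (S1⁻¹ * S1').trace := by
    rw [Matrix.mul_sub, Matrix.trace_sub] at htr1; linarith
  have e2 : (S1'⁻¹ * S0).trace = (n : ℝ) + k := by
    rw [Matrix.mul_sub, Matrix.trace_sub, Matrix.nonsing_inv_mul S1' hS1'U,
      Matrix.trace_one] at htr2
    simp only [Fintype.card_sum, Fintype.card_fin] at htr2
    push_cast at htr2
    linarith
  have hPartB : Idiv S0 S1 = Idiv S1' S1 + Idiv S0 S1' := by
    unfold Idiv
    rw [Real.log_div hS1U.ne_zero hS0U.ne_zero, Real.log_div hS1U.ne_zero hS1'U.ne_zero,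
      Real.log_div hS1'U.ne_zero hS0U.ne_zero]
    simp only [Fintype.card_sum, Fintype.card_fin]
    push_cast
    linarith [e1, e2]
  -- part C : Idiv S0 S1' = Idiv S0 S0' + Idiv S0' S1'
  have hS0'b : S0' = fromBlocks Shat (Shat * G⁻¹ * B₀) (C₀ * G⁻¹ * Shat)
      (E₀ - C₀ * G⁻¹ * (G - Shat) * G⁻¹ * B₀) := by
    rw [hS0', hS1'b, minOverSigma0_fromBlocks]
  have hS0'inv : S0'⁻¹ = fromBlocks
      (Shat⁻¹ + G⁻¹ * B₀ * (E₀ - C₀ * G⁻¹ * B₀)⁻¹ * C₀ * G⁻¹)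
      (-(G⁻¹ * B₀ * (E₀ - C₀ * G⁻¹ * B₀)⁻¹))
      (-((E₀ - C₀ * G⁻¹ * B₀)⁻¹ * C₀ * G⁻¹)) ((E₀ - C₀ * G⁻¹ * B₀)⁻¹) := by
    rw [hS0', hS1'b, inv_minOverSigma0 B₀ C₀ E₀ hShatU hGU hSc'U]
  have hS1'inv11 : S1'⁻¹ = fromBlocks
      (G⁻¹ + G⁻¹ * B₀ * (E₀ - C₀ * G⁻¹ * B₀)⁻¹ * C₀ * G⁻¹)
      (-(G⁻¹ * B₀ * (E₀ - C₀ * G⁻¹ * B₀)⁻¹))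
      (-((E₀ - C₀ * G⁻¹ * B₀)⁻¹ * C₀ * G⁻¹)) ((E₀ - C₀ * G⁻¹ * B₀)⁻¹) := by
    rw [hS1'b, inv_fromBlocks11' B₀ C₀ E₀ hGU hSc'U]
  have hdiffinv : S1'⁻¹ - S0'⁻¹ = fromBlocks (G⁻¹ - Shat⁻¹) 0 0 0 := by
    rw [hS1'inv11, hS0'inv, fromBlocks_sub', fromBlocks_inj]
    exact ⟨by abel, by simp, by simp, by simp⟩
  have key1 : (fromBlocks (G⁻¹ - Shat⁻¹) (0 : Matrix (Fin n) (Fin k) ℝ)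
      (0 : Matrix (Fin k) (Fin n) ℝ) (0 : Matrix (Fin k) (Fin k) ℝ) * S0).trace
      = ((G⁻¹ - Shat⁻¹) * Shat).trace := by
    rw [hS0b, fromBlocks_multiply, trace_fromBlocks']
    simp
  have key2 : (fromBlocks (G⁻¹ - Shat⁻¹) (0 : Matrix (Fin n) (Fin k) ℝ)
      (0 : Matrix (Fin k) (Fin n) ℝ) (0 : Matrix (Fin k) (Fin k) ℝ) * S0').trace
      = ((G⁻¹ - Shat⁻¹) * Shat).trace := by
    rw [hS0'b, fromBlocks_multiply, trace_fromBlocks']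
    simp
  have h3 : (S1'⁻¹ * S0).trace
      = (S0'⁻¹ * S0).trace + ((G⁻¹ - Shat⁻¹) * Shat).trace := by
    have hsb : (S1'⁻¹ * S0).trace - (S0'⁻¹ * S0).trace
        = ((G⁻¹ - Shat⁻¹) * Shat).trace := by
      rw [← Matrix.trace_sub, ← Matrix.sub_mul, hdiffinv, key1]
    linarith
  have h4 : (S1'⁻¹ * S0').trace
      = ((n : ℝ) + k) + ((G⁻¹ - Shat⁻¹) * Shat).trace := by
    have hsb' : (S1'⁻¹ * S0').trace - (S0'⁻¹ * S0').trace
        = ((G⁻¹ - Shat⁻¹) * Shat).trace := by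
      rw [← Matrix.trace_sub, ← Matrix.sub_mul, hdiffinv, key2]
    have hid : (S0'⁻¹ * S0').trace = (n : ℝ) + k := by
      rw [Matrix.nonsing_inv_mul S0' hS0'U, Matrix.trace_one]
      simp [Fintype.card_sum]
    linarith
  have hPartC : Idiv S0 S1' = Idiv S0 S0' + Idiv S0' S1' := by
    unfold Idiv
    rw [Real.log_div hS1'U.ne_zero hS0U.ne_zero, Real.log_div hS0'U.ne_zero hS0U.ne_zero,
      Real.log_div hS1'U.ne_zero hS0'U.ne_zero]
    simp only [Fintype.card_sum, Fintype.card_fin]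
    push_cast
    linarith [h3, h4]
  rw [hA1, hA2]
  linarith [hPartB, hPartC]
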